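/- arXiv:math/0107070 — 5 statements merged into one kernel-verified Lean document; each statement's English description precedes it below -/
import Mathlib

section
/- Let A be a unital complex *-algebra and let z^0, z^1, z^2, z^3 be elements of A satisfying, for each k in {1,2,3} with (k,ℓ,m) the cyclic permutation of (1,2,3) starting at k: (i) z^k (z^0)* − z^0 (z^k)* + z^ℓ (z^m)* − z^m (z^ℓ)* = 0, (ii) (z^0)* z^k − (z^k)* z^0 + (z^ℓ)* z^m − (z^m)* z^ℓ = 0, and (iii) Σ_{μ=0}^{3} (z^μ (z^μ)* − (z^μ)* z^μ) = 0. Then the element Σ_{μ=0}^{3} (z^μ)* z^μ commutes with each z^ν and each (z^ν)*, i.e. it lies in the center of the *-subalgebra generated by the z^μ. -/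
private lemma star_commute_aux {A : Type*} [Ring A] [StarRing A] (S x : A)
    (hS : star S = S) (h : S * x = x * S) : S * star x = star x * S := by
  have h' := congrArg star h
  rw [star_mul, star_mul, hS] at h'
  exact h'.symm

/-- In a unital complex *-algebra, if z^0,...,z^3 satisfy the relations
(i), (ii), (iii), then Σ (z^μ)* z^μ commutes with each z^ν and each (z^ν)*. -/
theorem stmt_0 {A : Type*} [Ring A] [Algebra ℂ A] [StarRing A]
    (z : Fin 4 → A)
    (h1 : ∀ p ∈ [((1 : Fin 4), (2 : Fin 4), (3 : Fin 4)), (2, 3, 1), (3, 1, 2)],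
      z p.1 * star (z 0) - z 0 * star (z p.1)
        + z p.2.1 * star (z p.2.2) - z p.2.2 * star (z p.2.1) = 0)
    (h2 : ∀ p ∈ [((1 : Fin 4), (2 : Fin 4), (3 : Fin 4)), (2, 3, 1), (3, 1, 2)],
      star (z 0) * z p.1 - star (z p.1) * z 0
        + star (z p.2.1) * z p.2.2 - star (z p.2.2) * z p.2.1 = 0)
    (h3 : ∑ μ : Fin 4, (z μ * star (z μ) - star (z μ) * z μ) = 0) :
    ∀ ν : Fin 4,
      Commute (∑ μ : Fin 4, star (z μ) * z μ) (z ν) ∧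
      Commute (∑ μ : Fin 4, star (z μ) * z μ) (star (z ν)) := by
  have e1 : z 1 * star (z 0) - z 0 * star (z 1) + z 2 * star (z 3) - z 3 * star (z 2) = 0 :=
    h1 (1,2,3) (by simp)
  have e2 : z 2 * star (z 0) - z 0 * star (z 2) + z 3 * star (z 1) - z 1 * star (z 3) = 0 :=
    h1 (2,3,1) (by simp)
  have e3 : z 3 * star (z 0) - z 0 * star (z 3) + z 1 * star (z 2) - z 2 * star (z 1) = 0 :=
    h1 (3,1,2) (by simp)
  have f1 : star (z 0) * z 1 - star (z 1) * z 0 + star (z 2) * z 3 - star (z 3) * z 2 = 0 :=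
    h2 (1,2,3) (by simp)
  have f2 : star (z 0) * z 2 - star (z 2) * z 0 + star (z 3) * z 1 - star (z 1) * z 3 = 0 :=
    h2 (2,3,1) (by simp)
  have f3 : star (z 0) * z 3 - star (z 3) * z 0 + star (z 1) * z 2 - star (z 2) * z 1 = 0 :=
    h2 (3,1,2) (by simp)
  rw [Fin.sum_univ_four] at h3
  set a := z 0 with ha
  set b := z 1 with hb
  set c := z 2 with hc
  set d := z 3 with hd
  set S : A := star a * a + star b * b + star c * c + star d * d with hSdef
  have hT : (a * star a + b * star b + c * star c + d * star d) - S = 0 := by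
    rw [← h3, hSdef]; noncomm_ring
  have hS : star S = S := by
    rw [hSdef]
    simp [star_add, star_mul, star_star]
  -- commutation with z 0
  have k0 : S * a - a * S =
      -(((a * star a + b * star b + c * star c + d * star d) - S) * a)
      + (b * star a - a * star b + c * star d - d * star c) * b
      + (c * star a - a * star c + d * star b - b * star d) * c
      + (d * star a - a * star d + b * star c - c * star b) * d
      - b * (star a * b - star b * a + star c * d - star d * c)
      - c * (star a * c - star c * a + star d * b - star b * d)
      - d * (star a * d - star d * a + star b * c - star c * b) := by
    rw [hSdef]; noncomm_ring
  rw [e1, e2, e3, f1, f2, f3, hT] at k0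
  have ka : S * a = a * S := by
    have := k0
    simp only [zero_mul, mul_zero, neg_zero, add_zero, sub_zero, zero_add] at this
    exact sub_eq_zero.mp this
  -- commutation with z 1
  have k1 : S * b - b * S =
      -(((a * star a + b * star b + c * star c + d * star d) - S) * b)
      - (b * star a - a * star b + c * star d - d * star c) * a
      + (c * star a - a * star c + d * star b - b * star d) * d
      - (d * star a - a * star d + b * star c - c * star b) * c
      + a * (star a * b - star b * a + star c * d - star d * c)
      + d * (star a * c - star c * a + star d * b - star b * d)
      - c * (star a * d - star d * a + star b * c - star c * b) := by
    rw [hSdef]; noncomm_ring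
  rw [e1, e2, e3, f1, f2, f3, hT] at k1
  have kb : S * b = b * S := by
    simp only [zero_mul, mul_zero, neg_zero, add_zero, sub_zero, zero_add, zero_sub,
      neg_eq_zero] at k1
    exact sub_eq_zero.mp k1
  -- commutation with z 2
  have k2 : S * c - c * S =
      -(((a * star a + b * star b + c * star c + d * star d) - S) * c)
      - (c * star a - a * star c + d * star b - b * star d) * a
      + (d * star a - a * star d + b * star c - c * star b) * b
      - (b * star a - a * star b + c * star d - d * star c) * d
      + a * (star a * c - star c * a + star d * b - star b * d)
      + b * (star a * d - star d * a + star b * c - star c * b)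
      - d * (star a * b - star b * a + star c * d - star d * c) := by
    rw [hSdef]; noncomm_ring
  rw [e1, e2, e3, f1, f2, f3, hT] at k2
  have kc : S * c = c * S := by
    simp only [zero_mul, mul_zero, neg_zero, add_zero, sub_zero, zero_add, zero_sub,
      neg_eq_zero] at k2
    exact sub_eq_zero.mp k2
  -- commutation with z 3
  have k3 : S * d - d * S =
      -(((a * star a + b * star b + c * star c + d * star d) - S) * d)
      - (d * star a - a * star d + b * star c - c * star b) * a
      + (b * star a - a * star b + c * star d - d * star c) * c
      - (c * star a - a * star c + d * star b - b * star d) * b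
      + a * (star a * d - star d * a + star b * c - star c * b)
      + c * (star a * b - star b * a + star c * d - star d * c)
      - b * (star a * c - star c * a + star d * b - star b * d) := by
    rw [hSdef]; noncomm_ring
  rw [e1, e2, e3, f1, f2, f3, hT] at k3
  have kd : S * d = d * S := by
    simp only [zero_mul, mul_zero, neg_zero, add_zero, sub_zero, zero_add, zero_sub,
      neg_eq_zero] at k3
    exact sub_eq_zero.mp k3
  intro ν
  have hsum : (∑ μ : Fin 4, star (z μ) * z μ) = S := by
    rw [Fin.sum_univ_four, ← ha, ← hb, ← hc, ← hd, hSdef]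
  rw [hsum]
  fin_cases ν
  · exact ⟨ka, star_commute_aux S a hS ka⟩
  · exact ⟨kb, star_commute_aux S b hS kb⟩
  · exact ⟨kc, star_commute_aux S c hS kc⟩
  · exact ⟨kd, star_commute_aux S d hS kd⟩
end

section
/- Let V be a finite-dimensional complex vector space (a subspace of a complex *-algebra suffices), and let z^0,...,z^3 be elements of a complex *-algebra A such that Σ_{μ=0}^{3} ((z^μ)* ⊗ z^μ − z^μ ⊗ (z^μ)*) = 0 in A ⊗ A. Then there exists a symmetric unitary matrix Λ ∈ M_4(ℂ) such that (z^μ)* = Σ_ν Λ^μ_ν z^ν for all μ. -/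
/-!
Star-preserving functionals `φ` on `A` turn the `z^μ` into vectors `q_φ = (φ (z^μ))_μ ∈ ℂ⁴`,
and pairing the tensor identity with `φ ⊗ ψ` says exactly that these vectors have a real Gram
matrix. Their real span `W` is then totally real, so a real orthonormal basis of `W` is a complex
orthonormal family. Extend it to an orthonormal basis `b` of `ℂ⁴` and let `B` be the matrix with
columns `b i`: the matrix `Λ = conj (B Bᵀ)` is symmetric and unitary and satisfies
`Λ b i = conj (b i)`, hence `Λ q = conj q` for every `q ∈ W`. So
`φ ((z^μ)^*) = conj (φ (z^μ)) = φ (∑ ν, Λ^μ_ν z^ν)` for every star-preserving `φ`, and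
star-preserving functionals separate points (`φ = ℜ φ + i ℑ φ`).
-/

open scoped InnerProductSpace Matrix

section StarModule

variable {V : Type*} [AddCommGroup V] [Module ℂ V] [StarAddMonoid V]

theorem im_star_dotProduct_eq_zero_of_sum_tmul {ι : Type*} [Fintype ι] {z : ι → V}
    (h : ∑ μ, (star (z μ) ⊗ₜ[ℂ] z μ - z μ ⊗ₜ[ℂ] star (z μ)) = 0)
    {φ ψ : Module.Dual ℂ V} (hφ : ∀ y, φ (star y) = star (φ y))
    (hψ : ∀ y, ψ (star y) = star (ψ y)) :
    (star (φ ∘ z) ⬝ᵥ (ψ ∘ z)).im = 0 := by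
  have h' := congr(TensorProduct.dualDistrib ℂ V V (φ ⊗ₜ ψ) $h)
  simp only [map_sum, map_sub, TensorProduct.dualDistrib_apply, hφ, hψ, map_zero,
    Finset.sum_sub_distrib, sub_eq_zero] at h'
  rw [← Complex.conj_eq_iff_im]
  simpa [dotProduct, mul_comm] using h'.symm

theorem eq_zero_of_forall_dual_map_star [StarModule ℂ V] {x : V}
    (hx : ∀ φ : Module.Dual ℂ V, (∀ y, φ (star y) = star (φ y)) → φ x = 0) : x = 0 := by
  refine (Module.forall_dual_apply_eq_zero_iff ℂ x).mp fun φ => ?_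
  have hsa (ψ : selfAdjoint (WithConv (Module.Dual ℂ V))) :
      (ψ : WithConv (Module.Dual ℂ V)) x = 0 :=
    hx _ ((LinearMap.IntrinsicStar.isSelfAdjoint_iff_map_star _).mp ψ.2)
  have hφ := congr_arg (fun ψ : WithConv (Module.Dual ℂ V) => ψ x)
    (realPart_add_I_smul_imaginaryPart (WithConv.toConv φ))
  simpa [hsa] using hφ.symm

end StarModule

section TotallyReal

variable {E : Type*} [NormedAddCommGroup E] [InnerProductSpace ℂ E]

theorem im_inner_eq_zero_of_mem_span {ι : Type*} {v : ι → E}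
    (hv : ∀ i j, (⟪v i, v j⟫_ℂ).im = 0) {x y : E}
    (hx : x ∈ Submodule.span ℝ (Set.range v)) (hy : y ∈ Submodule.span ℝ (Set.range v)) :
    (⟪x, y⟫_ℂ).im = 0 := by
  induction hx, hy using Submodule.span_induction₂ with
  | mem_mem x y hx hy => obtain ⟨i, rfl⟩ := hx; obtain ⟨j, rfl⟩ := hy; exact hv i j
  | zero_left => simp
  | zero_right => simp
  | add_left _ _ _ _ _ _ h₁ h₂ => simp [h₁, h₂]
  | add_right _ _ _ _ _ _ h₁ h₂ => simp [h₁, h₂]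
  | smul_left r _ _ _ _ h => simp [← Complex.coe_smul, h]
  | smul_right r _ _ _ _ h => simp [← Complex.coe_smul, h]

theorem Submodule.exists_orthonormalBasis_le_span_real [FiniteDimensional ℂ E]
    (W : Submodule ℝ E) (hW : ∀ x ∈ W, ∀ y ∈ W, (⟪x, y⟫_ℂ).im = 0) :
    ∃ (u : Finset E) (b : OrthonormalBasis u ℂ E), W ≤ Submodule.span ℝ (Set.range b) := by
  let _ := InnerProductSpace.complexToReal (G := E)
  let f := stdOrthonormalBasis ℝ W
  have hf : Orthonormal ℂ (fun j => (f j : E)) := by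
    rw [orthonormal_iff_ite]
    intro i j
    have hre : (⟪(f i : E), f j⟫_ℂ).re = if i = j then 1 else 0 :=
      orthonormal_iff_ite.mp f.orthonormal i j
    apply Complex.ext
    · rw [hre]
      split_ifs <;> simp
    · rw [hW _ (f i).2 _ (f j).2]
      split_ifs <;> simp
  obtain ⟨u, b, hsu, hb⟩ := ((orthonormal_subtype_range hf.linearIndependent.injective).mpr
    hf).exists_orthonormalBasis_extension
  refine ⟨u, b, ?_⟩
  have hspan : Submodule.span ℝ (Set.range fun j => (f j : E)) = W := by
    change Submodule.span ℝ (Set.range (W.subtype ∘ f)) = W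
    rw [Set.range_comp, Submodule.span_image, ← f.coe_toBasis, f.toBasis.span_eq,
      Submodule.map_subtype_top]
  rw [← hspan]
  exact Submodule.span_mono (by rw [hb, Subtype.range_coe]; exact hsu)

end TotallyReal

namespace OrthonormalBasis

variable {ι m : Type*} [Fintype ι] [Fintype m] (b : OrthonormalBasis ι ℂ (EuclideanSpace ℂ m))

noncomputable def symmUnitary : Matrix m m ℂ :=
  ((EuclideanSpace.basisFun m ℂ).toBasis.toMatrix b)ᴴᵀ *
    ((EuclideanSpace.basisFun m ℂ).toBasis.toMatrix b)ᴴ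

theorem symmUnitary_isSymm : b.symmUnitary.IsSymm := by
  simp [symmUnitary, Matrix.IsSymm, Matrix.transpose_mul]

theorem symmUnitary_mem_unitaryGroup [DecidableEq ι] [DecidableEq m] :
    b.symmUnitary ∈ Matrix.unitaryGroup m ℂ := by
  rw [Matrix.mem_unitaryGroup_iff', Matrix.star_eq_conjTranspose, symmUnitary]
  set B := (EuclideanSpace.basisFun m ℂ).toBasis.toMatrix b
  have h₁ : Bᴴ * B = 1 :=
    (EuclideanSpace.basisFun m ℂ).toMatrix_orthonormalBasis_conjTranspose_mul_self b
  have h₂ : B * Bᴴ = 1 :=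
    (EuclideanSpace.basisFun m ℂ).toMatrix_orthonormalBasis_self_mul_conjTranspose b
  rw [Matrix.conjTranspose_mul, Matrix.conjTranspose_conjTranspose, Matrix.mul_assoc,
    ← Matrix.mul_assoc Bᴴᵀᴴ, Matrix.conjTranspose_transpose_eq_transpose_conjTranspose,
    Matrix.conjTranspose_conjTranspose, ← Matrix.transpose_mul, h₁, Matrix.transpose_one,
    Matrix.one_mul, h₂]

theorem symmUnitary_mulVec_self [DecidableEq ι] (i : ι) :
    b.symmUnitary *ᵥ b i = star (b i).ofLp := by
  rw [symmUnitary, ← Matrix.mulVec_mulVec]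
  set B := (EuclideanSpace.basisFun m ℂ).toBasis.toMatrix b
  have h₁ : Bᴴ * B = 1 :=
    (EuclideanSpace.basisFun m ℂ).toMatrix_orthonormalBasis_conjTranspose_mul_self b
  have hcol : B *ᵥ Pi.single i 1 = b i := by
    ext μ
    simp [B, Module.Basis.toMatrix_apply]
  have hrepr : Bᴴ *ᵥ b i = Pi.single i 1 := by
    rw [← hcol, Matrix.mulVec_mulVec, h₁, Matrix.one_mulVec]
  rw [hrepr]
  ext μ
  simp [B, Module.Basis.toMatrix_apply]

theorem symmUnitary_mulVec_of_mem_span [DecidableEq ι] {x : EuclideanSpace ℂ m}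
    (hx : x ∈ Submodule.span ℝ (Set.range b)) : b.symmUnitary *ᵥ x = star x.ofLp := by
  induction hx using Submodule.span_induction with
  | mem _ hx => obtain ⟨i, rfl⟩ := hx; exact b.symmUnitary_mulVec_self i
  | zero => simp
  | add _ _ _ _ h₁ h₂ => simp [Matrix.mulVec_add, h₁, h₂]
  | smul r _ _ h => simp [Matrix.mulVec_smul, h]

end OrthonormalBasis

theorem Matrix.exists_isSymm_mem_unitaryGroup_mulVec_eq_star {ι m : Type*} [Fintype m]
    [DecidableEq m] (q : ι → m → ℂ) (hq : ∀ i j, (star (q i) ⬝ᵥ q j).im = 0) :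
    ∃ Λ : Matrix m m ℂ, Λ.IsSymm ∧ Λ ∈ Matrix.unitaryGroup m ℂ ∧ ∀ i, Λ *ᵥ q i = star (q i) := by
  classical
  let v (i : ι) : EuclideanSpace ℂ m := WithLp.toLp 2 (q i)
  have hv (i j : ι) : (⟪v i, v j⟫_ℂ).im = 0 := by
    rw [EuclideanSpace.inner_toLp_toLp, dotProduct_comm, hq]
  obtain ⟨u, b, hb⟩ := (Submodule.span ℝ (Set.range v)).exists_orthonormalBasis_le_span_real
    fun x hx y hy => im_inner_eq_zero_of_mem_span hv hx hy
  exact ⟨b.symmUnitary, b.symmUnitary_isSymm, b.symmUnitary_mem_unitaryGroup,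
    fun i => b.symmUnitary_mulVec_of_mem_span (hb (Submodule.subset_span ⟨i, rfl⟩))⟩

/-- If Σ_μ ((z^μ)* ⊗ z^μ − z^μ ⊗ (z^μ)*) = 0 in A ⊗ A, then there is a
symmetric unitary Λ ∈ M₄(ℂ) with (z^μ)* = Σ_ν Λ^μ_ν z^ν. -/
theorem stmt_1 {A : Type*} [Ring A] [Algebra ℂ A] [StarRing A] [StarModule ℂ A]
    (z : Fin 4 → A)
    (h : ∑ μ : Fin 4, (star (z μ) ⊗ₜ[ℂ] z μ - z μ ⊗ₜ[ℂ] star (z μ)) = 0) :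
    ∃ Λ : Matrix (Fin 4) (Fin 4) ℂ,
      Λ.IsSymm ∧ Λ ∈ Matrix.unitaryGroup (Fin 4) ℂ ∧
      ∀ μ : Fin 4, star (z μ) = ∑ ν : Fin 4, Λ μ ν • z ν := by
  obtain ⟨Λ, hsymm, hunit, hΛ⟩ := Matrix.exists_isSymm_mem_unitaryGroup_mulVec_eq_star
    (fun φ : {φ : Module.Dual ℂ A // ∀ y, φ (star y) = star (φ y)} => φ.1 ∘ z)
    fun φ ψ => im_star_dotProduct_eq_zero_of_sum_tmul h φ.2 ψ.2
  refine ⟨Λ, hsymm, hunit, fun μ => sub_eq_zero.mp (eq_zero_of_forall_dual_map_star ?_)⟩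
  intro φ hφ
  have hφμ := congr_fun (hΛ ⟨φ, hφ⟩) μ
  simp only [Matrix.mulVec, dotProduct, Function.comp_apply, Pi.star_apply] at hφμ
  simp [hφ, hφμ]
end

section
/- Let φ_1, φ_2, φ_3 be real numbers with cos(φ_k) ≠ 0 for all k and cos(φ_ℓ − φ_m) ≠ 0 for all ℓ ≠ m. Define J_{ℓm} = −tan(φ_ℓ − φ_m)·tan(φ_k) whenever (k,ℓ,m) is a cyclic permutation of (1,2,3). Then J_{12} + J_{23} + J_{31} + J_{12}·J_{23}·J_{31} = 0. -/
open Real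

/-!
With `tₖ = tan φₖ` the subtraction formula for `tan` turns the relation into an identity of
rational functions in `t₁, t₂, t₃`. Its denominators `1 + t_ℓ t_m` are nonzero because
`cos (φ_ℓ - φ_m) = cos φ_ℓ cos φ_m (1 + t_ℓ t_m)`.
-/

/-- `J_{ℓm}` in terms of `t = tan φ`, for `(k, ℓ, m)` a cyclic permutation of `(1, 2, 3)`. -/
def sklyaninJ {K : Type*} [Field K] (tℓ tm tk : K) : K :=
  -((tℓ - tm) / (1 + tℓ * tm)) * tk

theorem sklyaninJ_add_add_add_mul_mul {K : Type*} [Field K] {t₁ t₂ t₃ : K}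
    (h12 : 1 + t₁ * t₂ ≠ 0) (h23 : 1 + t₂ * t₃ ≠ 0) (h31 : 1 + t₃ * t₁ ≠ 0) :
    sklyaninJ t₁ t₂ t₃ + sklyaninJ t₂ t₃ t₁ + sklyaninJ t₃ t₁ t₂
      + sklyaninJ t₁ t₂ t₃ * sklyaninJ t₂ t₃ t₁ * sklyaninJ t₃ t₁ t₂ = 0 := by
  have h13 : 1 + t₁ * t₃ ≠ 0 := by rwa [mul_comm]
  unfold sklyaninJ
  field_simp
  ring

namespace Real

theorem cos_sub_eq_cos_mul_cos_mul_one_add_tan_mul_tan {x y : ℝ} (hx : cos x ≠ 0)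
    (hy : cos y ≠ 0) : cos (x - y) = cos x * cos y * (1 + tan x * tan y) := by
  rw [cos_sub, tan_eq_sin_div_cos, tan_eq_sin_div_cos]
  field_simp

theorem one_add_tan_mul_tan_ne_zero {x y : ℝ} (hx : cos x ≠ 0) (hy : cos y ≠ 0)
    (hxy : cos (x - y) ≠ 0) : 1 + tan x * tan y ≠ 0 :=
  right_ne_zero_of_mul (cos_sub_eq_cos_mul_cos_mul_one_add_tan_mul_tan hx hy ▸ hxy)

/-- When `cos (x - y) = 0`, both sides are the junk value `0`. -/
theorem tan_sub_of_cos_ne_zero {x y : ℝ} (hx : cos x ≠ 0) (hy : cos y ≠ 0) :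
    tan (x - y) = (tan x - tan y) / (1 + tan x * tan y) := by
  have hsin : sin (x - y) = cos x * cos y * (tan x - tan y) := by
    rw [sin_sub, tan_eq_sin_div_cos, tan_eq_sin_div_cos]
    field_simp
  rw [tan_eq_sin_div_cos, hsin, cos_sub_eq_cos_mul_cos_mul_one_add_tan_mul_tan hx hy,
    mul_div_mul_left _ _ (mul_ne_zero hx hy)]

end Real

/-- The Sklyanin compatibility relation
J₁₂ + J₂₃ + J₃₁ + J₁₂·J₂₃·J₃₁ = 0 for J_{ℓm} = −tan(φ_ℓ−φ_m)·tan(φ_k). -/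
theorem stmt_2 (φ₁ φ₂ φ₃ : ℝ)
    (h1 : cos φ₁ ≠ 0) (h2 : cos φ₂ ≠ 0) (h3 : cos φ₃ ≠ 0)
    (h12 : cos (φ₁ - φ₂) ≠ 0) (h23 : cos (φ₂ - φ₃) ≠ 0) (h31 : cos (φ₃ - φ₁) ≠ 0) :
    (-tan (φ₁ - φ₂) * tan φ₃) + (-tan (φ₂ - φ₃) * tan φ₁) + (-tan (φ₃ - φ₁) * tan φ₂)
      + (-tan (φ₁ - φ₂) * tan φ₃) * (-tan (φ₂ - φ₃) * tan φ₁) * (-tan (φ₃ - φ₁) * tan φ₂)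
      = 0 := by
  rw [tan_sub_of_cos_ne_zero h1 h2, tan_sub_of_cos_ne_zero h2 h3, tan_sub_of_cos_ne_zero h3 h1]
  exact sklyaninJ_add_add_add_mul_mul (one_add_tan_mul_tan_ne_zero h1 h2 h12)
    (one_add_tan_mul_tan_ne_zero h2 h3 h23) (one_add_tan_mul_tan_ne_zero h3 h1 h31)
end

section
/- Let Z be the vector field on ℝ³ given by Z = Σ_{k=1}^{3} sin(2φ_k) sin(φ_ℓ + φ_m − φ_k) ∂/∂φ_k, where (k,ℓ,m) runs over cyclic permutations of (1,2,3). For each cyclic permutation (k,ℓ,m) define J_{ℓm}(φ) = −tan(φ_ℓ − φ_m) tan(φ_k). Then Z(J_{ℓm}) = 0 wherever J_{ℓm} is defined (i.e. the derivative of J_{ℓm} along Z vanishes): sin(2φ_1) sin(φ_2+φ_3−φ_1) ∂_1 J_{ℓm} + sin(2φ_2) sin(φ_3+φ_1−φ_2) ∂_2 J_{ℓm} + sin(2φ_3) sin(φ_1+φ_2−φ_3) ∂_3 J_{ℓm} = 0. -/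
/-!
Along `Z`, `tan φ_k` and `tan (φ_ℓ - φ_m)` have logarithmic derivatives `2 sin (φ_ℓ + φ_m - φ_k)`
and `-2 sin (φ_ℓ + φ_m - φ_k)` (the second by a product-to-sum computation), so their product
`J_{ℓm}` is constant along `Z`. Since `Z` is invariant under cyclic relabelling of the
coordinates, one of the three parameters suffices.
-/

open Real

noncomputable def derivAlongZ (J : ℝ → ℝ → ℝ → ℝ) (a b c : ℝ) : ℝ :=
  sin (2*a) * sin (b + c - a) * deriv (fun t => J t b c) a
    + sin (2*b) * sin (c + a - b) * deriv (fun t => J a t c) b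
    + sin (2*c) * sin (a + b - c) * deriv (fun t => J a b t) c

lemma derivAlongZ_rotate (J : ℝ → ℝ → ℝ → ℝ) (a b c : ℝ) :
    derivAlongZ (fun x y z => J y z x) a b c = derivAlongZ J b c a := by
  unfold derivAlongZ
  ring

lemma sin_two_mul_mul_sin_sub_sin_two_mul_mul_sin (a b c : ℝ) :
    sin (2*c) * sin (a + b - c) - sin (2*b) * sin (c + a - b)
      = sin (2 * (b - c)) * sin (b + c - a) := by
  have h₁ := two_mul_sin_mul_sin (2*c) (a + b - c)
  have h₂ := two_mul_sin_mul_sin (2*b) (c + a - b)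
  have h₃ := two_mul_sin_mul_sin (2 * (b - c)) (b + c - a)
  rw [show 2*c - (a + b - c) = 3*c - a - b by ring, show 2*c + (a + b - c) = a + b + c by ring]
    at h₁
  rw [show 2*b - (c + a - b) = 3*b - c - a by ring, show 2*b + (c + a - b) = a + b + c by ring]
    at h₂
  rw [show 2 * (b - c) - (b + c - a) = b - 3*c + a by ring,
    show 2 * (b - c) + (b + c - a) = 3*b - c - a by ring,
    show b - 3*c + a = -(3*c - a - b) by ring, cos_neg] at h₃
  linarith

lemma derivAlongZ_sklyanin (a b c : ℝ) (ha : cos a ≠ 0) (hbc : cos (b - c) ≠ 0) :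
    derivAlongZ (fun x y z => -tan (y - z) * tan x) a b c = 0 := by
  have d₁ : deriv (fun t => -tan (b - c) * tan t) a = -tan (b - c) * (1 / cos a ^ 2) :=
    ((hasDerivAt_tan ha).const_mul _).deriv
  have d₂ : deriv (fun t => -tan (t - c) * tan a) b = -(1 / cos (b - c) ^ 2) * tan a := by
    have := (((hasDerivAt_tan hbc).comp b ((hasDerivAt_id b).sub_const c)).neg).mul_const (tan a)
    simpa using this.deriv
  have d₃ : deriv (fun t => -tan (b - t) * tan a) c = 1 / cos (b - c) ^ 2 * tan a := by
    have := (((hasDerivAt_tan hbc).comp c ((hasDerivAt_id c).const_sub b)).neg).mul_const (tan a)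
    simpa using this.deriv
  simp only [derivAlongZ, d₁, d₂, d₃]
  have key := sin_two_mul_mul_sin_sub_sin_two_mul_mul_sin a b c
  rw [sin_two_mul (b - c)] at key
  rw [tan_eq_sin_div_cos, tan_eq_sin_div_cos, sin_two_mul a]
  field_simp
  linear_combination sin a * key

/-- The Sklyanin parameters J_{ℓm}(φ) = −tan(φ_ℓ−φ_m)·tan(φ_k) are constant
along the flow of the vector field Z = Σ_k sin(2φ_k) sin(φ_ℓ+φ_m−φ_k) ∂/∂φ_k :
the derivative of each J_{ℓm} along Z vanishes wherever the tangents are defined. -/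
theorem stmt_5 (a b c : ℝ)
    (h1 : cos a ≠ 0) (h2 : cos b ≠ 0) (h3 : cos c ≠ 0)
    (h12 : cos (a - b) ≠ 0) (h23 : cos (b - c) ≠ 0) (h31 : cos (c - a) ≠ 0) :
    ∀ J ∈ [(fun x y z : ℝ => -tan (y - z) * tan x),
           (fun x y z : ℝ => -tan (z - x) * tan y),
           (fun x y z : ℝ => -tan (x - y) * tan z)],
      sin (2*a) * sin (b + c - a) * deriv (fun t => J t b c) a
        + sin (2*b) * sin (c + a - b) * deriv (fun t => J a t c) b
        + sin (2*c) * sin (a + b - c) * deriv (fun t => J a b t) c = 0 := by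
  intro J hJ
  simp only [List.mem_cons, List.not_mem_nil, or_false] at hJ
  rcases hJ with rfl | rfl | rfl
  · exact derivAlongZ_sklyanin a b c h1 h23
  · exact (derivAlongZ_rotate _ a b c).trans (derivAlongZ_sklyanin b c a h2 h31)
  · exact (derivAlongZ_rotate _ a b c).trans <|
      (derivAlongZ_rotate _ b c a).trans (derivAlongZ_sklyanin c a b h3 h12)
end

section
/- With a_μ = Γ^{μ*} ⊗ z^μ, b_μ = Γ^μ ⊗ z̄^μ in Cliff(ℝ^{2n}_θ) ⊗ C_alg(ℝ^{2n}_θ) as above, one has (Σ_{μ=1}^{n} (a_μ + b_μ))² = 1 ⊗ Σ_{μ=1}^{n} z^μ z̄^μ. -/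
open Complex Matrix
open scoped TensorProduct

private lemma sum_antisym {M : Type*} [AddCommGroup M] [Module ℂ M] {n : ℕ}
    (g : Fin n → Fin n → M) (h : ∀ μ ν, g μ ν + g ν μ = 0) :
    ∑ μ : Fin n, ∑ ν : Fin n, g μ ν = 0 := by
  have h2 : (∑ μ : Fin n, ∑ ν : Fin n, g μ ν) + (∑ μ : Fin n, ∑ ν : Fin n, g μ ν) = 0 := by
    nth_rewrite 1 [show (∑ μ : Fin n, ∑ ν : Fin n, g μ ν)
      = ∑ μ : Fin n, ∑ ν : Fin n, g ν μ from Finset.sum_comm]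
    rw [← Finset.sum_add_distrib]
    refine Finset.sum_eq_zero fun μ _ => ?_
    rw [← Finset.sum_add_distrib]
    exact Finset.sum_eq_zero fun ν _ => h ν μ
  have : (2 : ℂ) • (∑ μ : Fin n, ∑ ν : Fin n, g μ ν) = 0 := by
    rw [two_smul]; exact h2
  simpa using this

/-- With a_μ = Γ^{μ*} ⊗ z^μ and b_μ = Γ^μ ⊗ z̄^μ in
Cliff(ℝ^{2n}_θ) ⊗ C_alg(ℝ^{2n}_θ), one has (Σ_μ (a_μ + b_μ))² = 1 ⊗ Σ_μ z^μ z̄^μ. -/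
theorem stmt_12 {n : ℕ} (θ : Matrix (Fin n) (Fin n) ℝ) (hθ : θᵀ = -θ)
    {C : Type*} [Ring C] [Algebra ℂ C] {A : Type*} [Ring A] [Algebra ℂ A]
    (Γ Γs : Fin n → C)
    (hc1 : ∀ μ ν, Γ μ * Γ ν + Complex.exp (θ ν μ * I) • (Γ ν * Γ μ) = 0)
    (hc2 : ∀ μ ν, Γs μ * Γs ν + Complex.exp (θ ν μ * I) • (Γs ν * Γs μ) = 0)
    (hc3 : ∀ μ ν, Γs μ * Γ ν + Complex.exp (θ μ ν * I) • (Γ ν * Γs μ)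
        = if μ = ν then 1 else 0)
    (z zbar : Fin n → A)
    (hzz : ∀ μ ν, z μ * z ν = Complex.exp (θ μ ν * I) • (z ν * z μ))
    (hbb : ∀ μ ν, zbar μ * zbar ν = Complex.exp (θ μ ν * I) • (zbar ν * zbar μ))
    (hbz : ∀ μ ν, zbar μ * z ν = Complex.exp (θ ν μ * I) • (z ν * zbar μ)) :
    (∑ μ : Fin n, (Γs μ ⊗ₜ[ℂ] z μ + Γ μ ⊗ₜ[ℂ] zbar μ))
        * (∑ μ : Fin n, (Γs μ ⊗ₜ[ℂ] z μ + Γ μ ⊗ₜ[ℂ] zbar μ))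
      = (1 : C) ⊗ₜ[ℂ] (∑ μ : Fin n, z μ * zbar μ) := by
  have hθ' : ∀ μ ν, θ ν μ = -θ μ ν := by
    intro μ ν
    have := congrFun (congrFun hθ μ) ν
    simpa [Matrix.transpose_apply, Matrix.neg_apply] using this
  have hexp : ∀ μ ν : Fin n,
      Complex.exp ((θ μ ν : ℂ) * I) * Complex.exp ((θ ν μ : ℂ) * I) = 1 := by
    intro μ ν
    rw [← Complex.exp_add, hθ' μ ν]
    push_cast
    ring_nf
    exact Complex.exp_zero
  -- antisymmetric vanishing of the Γs-Γs part
  have T1 : ∑ μ : Fin n, ∑ ν : Fin n,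
      (Γs μ * Γs ν) ⊗ₜ[ℂ] (z μ * z ν) = 0 := by
    refine sum_antisym _ fun μ ν => ?_
    have h1 : Γs μ * Γs ν = -(Complex.exp (θ ν μ * I) • (Γs ν * Γs μ)) :=
      eq_neg_of_add_eq_zero_left (hc2 μ ν)
    rw [hzz μ ν, h1, TensorProduct.tmul_smul, TensorProduct.neg_tmul,
      ← TensorProduct.smul_tmul', smul_neg, smul_smul, hexp μ ν, one_smul]
    exact neg_add_cancel _
  have T4 : ∑ μ : Fin n, ∑ ν : Fin n,
      (Γ μ * Γ ν) ⊗ₜ[ℂ] (zbar μ * zbar ν) = 0 := by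
    refine sum_antisym _ fun μ ν => ?_
    have h1 : Γ μ * Γ ν = -(Complex.exp (θ ν μ * I) • (Γ ν * Γ μ)) :=
      eq_neg_of_add_eq_zero_left (hc1 μ ν)
    rw [hbb μ ν, h1, TensorProduct.tmul_smul, TensorProduct.neg_tmul,
      ← TensorProduct.smul_tmul', smul_neg, smul_smul, hexp μ ν, one_smul]
    exact neg_add_cancel _
  have hcross : ∀ μ ν : Fin n,
      (Γs μ * Γ ν) ⊗ₜ[ℂ] (z μ * zbar ν) + (Γ ν * Γs μ) ⊗ₜ[ℂ] (zbar ν * z μ)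
        = (if μ = ν then (1 : C) else 0) ⊗ₜ[ℂ] (z μ * zbar ν) := by
    intro μ ν
    rw [hbz ν μ, TensorProduct.tmul_smul, TensorProduct.smul_tmul',
      ← TensorProduct.add_tmul, hc3 μ ν]
  rw [Finset.sum_mul_sum]
  simp only [add_mul, mul_add, Algebra.TensorProduct.tmul_mul_tmul]
  simp only [Finset.sum_add_distrib]
  rw [T1, T4]
  have T3 : ∑ μ : Fin n, ∑ ν : Fin n, (Γ μ * Γs ν) ⊗ₜ[ℂ] (zbar μ * z ν)
      = ∑ μ : Fin n, ∑ ν : Fin n, (Γ ν * Γs μ) ⊗ₜ[ℂ] (zbar ν * z μ) :=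
    Finset.sum_comm
  rw [T3]
  rw [zero_add, add_zero, ← Finset.sum_add_distrib]
  simp only [← Finset.sum_add_distrib]
  calc ∑ μ : Fin n, ∑ ν : Fin n,
        ((Γ ν * Γs μ) ⊗ₜ[ℂ] (zbar ν * z μ) + (Γs μ * Γ ν) ⊗ₜ[ℂ] (z μ * zbar ν))
      = ∑ μ : Fin n, ∑ ν : Fin n,
        (if μ = ν then (1 : C) else 0) ⊗ₜ[ℂ] (z μ * zbar ν) := by
        exact Finset.sum_congr rfl fun μ _ => Finset.sum_congr rfl fun ν _ =>
          (add_comm _ _).trans (hcross μ ν)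
    _ = ∑ μ : Fin n, (1 : C) ⊗ₜ[ℂ] (z μ * zbar μ) := by
        refine Finset.sum_congr rfl fun μ _ => ?_
        rw [Finset.sum_eq_single μ]
        · simp
        · intro ν _ hne
          simp [Ne.symm hne, TensorProduct.zero_tmul]
        · simp
    _ = (1 : C) ⊗ₜ[ℂ] (∑ μ : Fin n, z μ * zbar μ) := (TensorProduct.tmul_sum _ _ _).symm
end
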